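/- Under the stated assumptions on V, for every j ∈ ℤ and every r = 1, …, p, V_{−r,j} = ṽ_{j−r} − h Σ_{ℓ=1}^{r} σ_{j−ℓ} Φ̂^{(r+1−ℓ)}_{j−ℓ}. -/

import Mathlib

/-- The discrete complex stretching grid
`Z_{j,k} = (j+k)h + i(h/ω) Σ_{ℓ=0}^{k-1} σ_ℓ` (the sum being 0 for `k ≤ 0`). -/
noncomputable def Zmap (h ω : ℝ) (σ : ℤ → ℝ) (j k : ℤ) : ℂ :=
  ((j + k : ℤ) : ℂ) * (h : ℂ) +
    Complex.I * ((h : ℂ) / (ω : ℂ)) * ∑ l ∈ Finset.range k.toNat, ((σ l : ℝ) : ℂ)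

/-- Discrete holomorphicity with respect to the grid `Zmap h ω σ`: the discrete
Cauchy–Riemann equations hold on every face. -/
def DiscreteHolo (h ω : ℝ) (σ : ℤ → ℝ) (F : ℤ → ℤ → ℂ) : Prop :=
  ∀ j k : ℤ,
    (F (j + 1) (k + 1) - F j k) * (Zmap h ω σ j (k + 1) - Zmap h ω σ (j + 1) k) =
    (F j (k + 1) - F (j + 1) k) * (Zmap h ω σ (j + 1) (k + 1) - Zmap h ω σ j k)

/-- The auxiliary variable `Φ̂^{(r)}_j = (V_{−r+1,j+1} − V_{−r,j}) / (iω(2h + iσ_j h/ω))`. -/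
noncomputable def PhiAux (h ω : ℝ) (σ : ℤ → ℝ) (V : ℤ → ℤ → ℂ) (r j : ℤ) : ℂ :=
  (V (-r + 1) (j + 1) - V (-r) j) /
    (Complex.I * (ω : ℂ) * (2 * (h : ℂ) + Complex.I * (σ j : ℂ) * (h : ℂ) / (ω : ℂ)))

/-- The auxiliary variable `Ψ̂^{(r)}_j = (V_{r,j} − V_{r−1,j−1}) / (iω(2h + iσ_{j−1} h/ω))`. -/
noncomputable def PsiAux (h ω : ℝ) (σ : ℤ → ℝ) (V : ℤ → ℤ → ℂ) (r j : ℤ) : ℂ :=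
  (V r j - V (r - 1) (j - 1)) /
    (Complex.I * (ω : ℂ) * (2 * (h : ℂ) + Complex.I * (σ (j - 1) : ℂ) * (h : ℂ) / (ω : ℂ)))

/-!
Each face of the grid relates the two diagonals of a cell. Along the damped direction the
diagonal step of `Z` is `2h + iσ_k h/ω`, whose real part `2h` makes it invertible, so every face
equation can be solved for `V_{-r,j}` in terms of `V_{-r+1,j-1}` and a correction
`-h σ_{j-1} Φ̂^{(r)}_{j-1}`. Iterating this `r` times along the diagonal down to the column
`V_{0,·}` collects the corrections into the stated sum.
-/

open Finset Complex

lemma sum_range_toNat_add_one {M : Type*} [AddCommMonoid M] {f : ℤ → M}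
    (hf : ∀ k < 0, f k = 0) (k : ℤ) :
    ∑ l ∈ range (k + 1).toNat, f l = ∑ l ∈ range k.toNat, f l + f k := by
  rcases le_or_gt 0 k with hk | hk
  · rw [show (k + 1).toNat = k.toNat + 1 by omega, sum_range_succ, Int.toNat_of_nonneg hk]
  · rw [show (k + 1).toNat = 0 by omega, show k.toNat = 0 by omega, hf k hk, add_zero]

lemma sum_Icc_one_add_one {M : Type*} [AddCommMonoid M] (f : ℤ → M) {r : ℤ} (hr : 0 ≤ r) :
    ∑ l ∈ Icc 1 (r + 1), f l = f 1 + ∑ l ∈ Icc 1 r, f (l + 1) := by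
  rw [← insert_Icc_add_one_left_eq_Icc (by omega), sum_insert (by simp),
    ← map_add_right_Icc 1 r 1, sum_map]
  rfl

section Grid

variable {h ω : ℝ} {σ : ℤ → ℝ}

lemma Zmap_add_one_left (j k : ℤ) : Zmap h ω σ (j + 1) k = Zmap h ω σ j k + h := by
  simp only [Zmap]
  push_cast
  ring

lemma Zmap_add_one_right (hσ : ∀ k < 0, σ k = 0) (j k : ℤ) :
    Zmap h ω σ j (k + 1) = Zmap h ω σ j k + h + I * (h / ω) * σ k := by
  have hσc : ∀ k < 0, ((σ k : ℝ) : ℂ) = 0 := fun k hk => by rw [hσ k hk, ofReal_zero]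
  simp only [Zmap, sum_range_toNat_add_one (f := fun l => ((σ l : ℝ) : ℂ)) hσc]
  push_cast
  ring

variable {V : ℤ → ℤ → ℂ}

lemma DiscreteHolo.eq_sub_mul_phiAux (hh : h ≠ 0) (hσ : ∀ k < 0, σ k = 0)
    (hV : DiscreteHolo h ω σ V) (j k : ℤ) :
    V j (k + 1) = V (j + 1) k - h * σ k * PhiAux h ω σ V (-j) k := by
  have face := hV j k
  simp only [Zmap_add_one_left, Zmap_add_one_right hσ] at face
  have hw : (2 * h + I * σ k * h / ω : ℂ) ≠ 0 := fun h0 =>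
    hh (by simpa using congrArg re h0)
  rw [PhiAux, neg_neg, div_eq_mul_inv, mul_inv, mul_inv, inv_I]
  linear_combination -(2 * h + I * σ k * h / ω : ℂ)⁻¹ * face -
    (V j (k + 1) - V (j + 1) k) * mul_inv_cancel₀ hw

lemma DiscreteHolo.eq_sub_sum_phiAux (hh : h ≠ 0) (hσ : ∀ k < 0, σ k = 0)
    (hV : DiscreteHolo h ω σ V) {r : ℤ} (hr : 0 ≤ r) (j : ℤ) :
    V (-r) j = V 0 (j - r) -
      h * ∑ l ∈ Icc 1 r, (σ (j - l) : ℂ) * PhiAux h ω σ V (r + 1 - l) (j - l) := by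
  induction r, hr using Int.leInduction generalizing j with
  | base => simp
  | succ r hr ih =>
    have step := hV.eq_sub_mul_phiAux hh hσ (-(r + 1)) (j - 1)
    rw [sub_add_cancel, neg_neg, show -(r + 1) + 1 = -r by ring] at step
    rw [step, ih, sum_Icc_one_add_one _ hr]
    simp only [show ∀ l : ℤ, j - (l + 1) = j - 1 - l by intro l; ring,
      show ∀ l : ℤ, r + 1 + 1 - (l + 1) = r + 1 - l by intro l; ring, add_sub_cancel_right]
    ring

end Grid

theorem stmt11_general
    (h : ℝ) (hh : 0 < h)
    (ω : ℝ)
    (σ : ℤ → ℝ) (hσneg : ∀ j : ℤ, j < 0 → σ j = 0)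
    (V : ℤ → ℤ → ℂ) (hholo : DiscreteHolo h ω σ V)
    (j : ℤ) (r : ℤ) (hr1 : 1 ≤ r) :
    V (-r) j = V 0 (j - r) -
      (h : ℂ) * ∑ l ∈ Finset.Icc (1 : ℤ) r,
        (σ (j - l) : ℂ) * PhiAux h ω σ V (r + 1 - l) (j - l) :=
  hholo.eq_sub_sum_phiAux hh.ne' hσneg (by omega) j

/-- identity `V_{−r,j} = ṽ_{j−r} − h Σ_{ℓ=1}^{r} σ_{j−ℓ} Φ̂^{(r+1−ℓ)}_{j−ℓ}`,
where `ṽ_j = V_{0,j}`. -/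
theorem stmt11
    (p : ℕ) (hp : 1 ≤ p) (h : ℝ) (hh : 0 < h)
    (a : ℤ → ℝ) (hsym : ∀ r : ℤ, a (-r) = a r)
    (ω : ℝ) (hω : ω ≠ 0)
    (σ : ℤ → ℝ) (hσ : ∀ j : ℤ, 0 ≤ σ j) (hσneg : ∀ j : ℤ, j < 0 → σ j = 0)
    (V : ℤ → ℤ → ℂ) (hholo : DiscreteHolo h ω σ V)
    (heq : ∀ j k : ℤ, (∑ r ∈ Finset.Icc (-(p : ℤ)) (p : ℤ), (a r : ℂ) * V (j + r) k) +
        (ω : ℂ) ^ 2 * V j k = 0)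
    (j : ℤ) (r : ℤ) (hr1 : 1 ≤ r) (hrp : r ≤ (p : ℤ)) :
    V (-r) j = V 0 (j - r) -
      (h : ℂ) * ∑ l ∈ Finset.Icc (1 : ℤ) r,
        (σ (j - l) : ℂ) * PhiAux h ω σ V (r + 1 - l) (j - l) :=
  stmt11_general h hh ω σ hσneg V hholo j r hr1
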